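/- A world ω is a causal world of a deterministic causal system CS = (Δ, E, O) if and only if ω satisfies the observations O, ω satisfies natural necessity (ω models constraint(R) for every rule R ∈ Δ, where constraint(φ ⇒ ψ) = φ → ψ), and ω is explainable (every literal true in ω lies in C|_ω(ω ∩ E), the consequence closure of the external premises true in ω under the rules of Δ whose constraint content ω satisfies). -/
import Mathlib


/-- Propositional formulas over an alphabet `α`. -/
inductive Form (α : Type) : Type where
  | atom : α → Form α
  | tru : Form α
  | fls : Form α
  | neg : Form α → Form α
  | conj : Form α → Form α → Form α
  | disj : Form α → Form α → Form α

variable {α : Type}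

/-- Truth-value of a formula in a world (truth assignment). -/
def Form.eval (v : α → Bool) : Form α → Bool
  | .atom a => v a
  | .tru => true
  | .fls => false
  | .neg φ => !φ.eval v
  | .conj φ ψ => φ.eval v && ψ.eval v
  | .disj φ ψ => φ.eval v || ψ.eval v

/-- Material implication. -/
def Form.impl (φ ψ : Form α) : Form α := .disj (.neg φ) ψ

/-- Biconditional. -/
def Form.iff (φ ψ : Form α) : Form α := .conj (φ.impl ψ) (ψ.impl φ)

/-- Classical (semantic) entailment, `Φ ⊢ ψ`. -/
def Entails (Φ : Set (Form α)) (ψ : Form α) : Prop :=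
  ∀ v : α → Bool, (∀ φ ∈ Φ, φ.eval v = true) → ψ.eval v = true

/-- Conjunction of a finite list of formulas. -/
def conjList (L : List (Form α)) : Form α := L.foldr .conj .tru

/-- Disjunction of a finite list of formulas. -/
def disjList (L : List (Form α)) : Form α := L.foldr .disj .fls

/-- Literals: an atom together with a polarity. -/
def litForm (l : α × Bool) : Form α := if l.2 then .atom l.1 else .neg (.atom l.1)

/-- The set of formulas true in a world: a world viewed as a maximal
deductively closed consistent set of formulas. -/
def worldSet (v : α → Bool) : Set (Form α) := {φ : Form α | φ.eval v = true}

/-- The smallest causal production inference relation containing the causal theory `Δ`: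
closed under Strengthening, Weakening, And, Truth/Falsity, Cut and Or. -/
inductive Derives (Δ : Set (Form α × Form α)) : Form α → Form α → Prop where
  | base {φ ψ} : (φ, ψ) ∈ Δ → Derives Δ φ ψ
  | strengthening {φ ψ ρ} : Entails {φ} ψ → Derives Δ ψ ρ → Derives Δ φ ρ
  | weakening {φ ψ ρ} : Derives Δ φ ψ → Entails {ψ} ρ → Derives Δ φ ρ
  | and {φ ψ ρ} : Derives Δ φ ψ → Derives Δ φ ρ → Derives Δ φ (ψ.conj ρ)
  | top : Derives Δ .tru .tru
  | bot : Derives Δ .fls .fls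
  | cut {φ ψ ρ} : Derives Δ φ ψ → Derives Δ (φ.conj ψ) ρ → Derives Δ φ ρ
  | or {φ ψ ρ} : Derives Δ φ ρ → Derives Δ ψ ρ → Derives Δ (φ.disj ψ) ρ

/-- The consequence operator `C` of the causal production inference relation
generated by `Δ`: `ψ ∈ C(Φ)` iff a finite conjunction from `Φ` produces `ψ`. -/
def Cons (Δ : Set (Form α × Form α)) (Φ : Set (Form α)) : Set (Form α) :=
  {ψ | ∃ L : List (Form α), (∀ φ ∈ L, φ ∈ Φ) ∧ Derives Δ (conjList L) ψ}

/-- A deterministic causal system: causal knowledge `Δ` (a causal theory given as a set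
of (cause, effect) pairs), external premises `E` (a set of literals) and
observations `O`. -/
structure CausalSystem (α : Type) where
  Δ : Set (Form α × Form α)
  E : Set (α × Bool)
  O : Set (Form α)

/-- The explanatory closure `Δ(CS) = Δ ∪ {l ⇒ l : l ∈ E}`. -/
def CausalSystem.closure (CS : CausalSystem α) : Set (Form α × Form α) :=
  CS.Δ ∪ {p | ∃ l ∈ CS.E, p = (litForm l, litForm l)}

/-- The external premises true in the world `v`. -/
def CausalSystem.extTrue (CS : CausalSystem α) (v : α → Bool) : Set (Form α) :=
  {φ | ∃ l ∈ CS.E, φ = litForm l ∧ (litForm l).eval v = true}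

/-- `v` is a causal world of the causal system: `C(ω ∩ E) = ω` and `ω ⊨ O`. -/
def CausalSystem.CausalWorld (CS : CausalSystem α) (v : α → Bool) : Prop :=
  Cons CS.closure (CS.extTrue v) = worldSet v ∧ ∀ o ∈ CS.O, o.eval v = true

/-- The constraint content of a causal rule `φ ⇒ ψ` is the material implication `φ → ψ`. -/
def constraintForm (r : Form α × Form α) : Form α := r.1.impl r.2

/-- The explanatory content of the system in a world `v`: the rules of the explanatory
closure whose constraint content `v` satisfies. -/
def CausalSystem.restr (CS : CausalSystem α) (v : α → Bool) : Set (Form α × Form α) :=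
  {r ∈ CS.closure | (constraintForm r).eval v = true}

/-- `v` satisfies natural necessity: it models the constraint content of every rule. -/
def CausalSystem.Necessary (CS : CausalSystem α) (v : α → Bool) : Prop :=
  ∀ r ∈ CS.closure, (constraintForm r).eval v = true

/-- `v` is explainable: every literal true in `v` lies in `C|_ω(ω ∩ E)`, the
consequence closure of the true external premises under the rules whose constraint
content `v` satisfies. -/
def CausalSystem.Sufficient (CS : CausalSystem α) (v : α → Bool) : Prop :=
  ∀ l : α × Bool, (litForm l).eval v = true → litForm l ∈ Cons (CS.restr v) (CS.extTrue v)

/-- `φ ⇒ ψ` is a literal causal rule: the body a conjunction of literals, the head a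
literal. -/
def IsLiteralRule (r : Form α × Form α) : Prop :=
  (∃ L : List (α × Bool), r.1 = conjList (L.map litForm)) ∧ ∃ l : α × Bool, r.2 = litForm l

section Aux

lemma conjList_eval (v : α → Bool) (L : List (Form α)) :
    (conjList L).eval v = true ↔ ∀ φ ∈ L, φ.eval v = true := by
  induction L with
  | nil => simp [conjList, Form.eval]
  | cons a t ih => simp [conjList, Form.eval] at ih ⊢; tauto

lemma derives_sound {Δ : Set (Form α × Form α)} {v : α → Bool}
    (hΔ : ∀ r ∈ Δ, (constraintForm r).eval v = true) {φ ψ : Form α}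
    (h : Derives Δ φ ψ) : φ.eval v = true → ψ.eval v = true := by
  induction h with
  | base hr =>
      have := hΔ _ hr
      simp [constraintForm, Form.impl, Form.eval] at this
      intro h; simpa [h] using this
  | strengthening hent _ ih =>
      intro h; exact ih (hent v (by simpa using h))
  | weakening _ hent ih =>
      intro h; exact hent v (by simpa using ih h)
  | and _ _ ih1 ih2 => intro h; simp [Form.eval, ih1 h, ih2 h]
  | top => intro h; exact h
  | bot => intro h; exact h
  | cut _ _ ih1 ih2 =>
      intro h; exact ih2 (by simp [Form.eval, h, ih1 h])
  | or _ _ ih1 ih2 =>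
      intro h
      simp [Form.eval] at h
      rcases h with h | h
      · exact ih1 h
      · exact ih2 h

lemma cons_weaken {Δ : Set (Form α × Form α)} {Φ : Set (Form α)} {φ ψ : Form α}
    (h : φ ∈ Cons Δ Φ) (hent : Entails {φ} ψ) : ψ ∈ Cons Δ Φ := by
  obtain ⟨L, hL, hd⟩ := h
  refine ⟨L, hL, hd.weakening ?_⟩
  intro w hw
  exact hent w (by simpa using hw)

lemma entails_conjList_append_left (L M : List (Form α)) :
    Entails {conjList (L ++ M)} (conjList L) := by
  intro w hw
  have := hw (conjList (L ++ M)) rfl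
  rw [conjList_eval] at this ⊢
  intro φ hφ; exact this φ (by simp [hφ])

lemma entails_conjList_append_right (L M : List (Form α)) :
    Entails {conjList (L ++ M)} (conjList M) := by
  intro w hw
  have := hw (conjList (L ++ M)) rfl
  rw [conjList_eval] at this ⊢
  intro φ hφ; exact this φ (by simp [hφ])

lemma cons_and {Δ : Set (Form α × Form α)} {Φ : Set (Form α)} {φ ψ : Form α}
    (h1 : φ ∈ Cons Δ Φ) (h2 : ψ ∈ Cons Δ Φ) : φ.conj ψ ∈ Cons Δ Φ := by
  obtain ⟨L, hL, hd⟩ := h1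
  obtain ⟨M, hM, hd'⟩ := h2
  refine ⟨L ++ M, ?_, ?_⟩
  · intro χ hχ; rcases List.mem_append.1 hχ with h | h
    · exact hL _ h
    · exact hM _ h
  · exact Derives.and
      (Derives.strengthening (entails_conjList_append_left L M) hd)
      (Derives.strengthening (entails_conjList_append_right L M) hd')

lemma cons_list_and {Δ : Set (Form α × Form α)} {Φ : Set (Form α)} {L : List (Form α)}
    (h : ∀ ψ ∈ L, ψ ∈ Cons Δ Φ) : conjList L ∈ Cons Δ Φ := by
  induction L with
  | nil => exact ⟨[], by simp, Derives.top⟩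
  | cons a t ih =>
      exact cons_and (h a (by simp)) (ih (fun ψ hψ => h ψ (by simp [hψ])))

/-- Atoms of a formula -/
def Form.atoms : Form α → List α
  | .atom a => [a]
  | .tru => []
  | .fls => []
  | .neg φ => φ.atoms
  | .conj φ ψ => φ.atoms ++ ψ.atoms
  | .disj φ ψ => φ.atoms ++ ψ.atoms

lemma eval_congr {v w : α → Bool} (φ : Form α)
    (h : ∀ a ∈ φ.atoms, v a = w a) : φ.eval v = φ.eval w := by
  induction φ with
  | atom a => exact h a (by simp [Form.atoms])
  | tru => rfl
  | fls => rfl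
  | neg φ ih => simp [Form.eval, ih (fun a ha => h a (by simpa [Form.atoms] using ha))]
  | conj φ ψ ih1 ih2 =>
      simp [Form.eval, ih1 (fun a ha => h a (by simp [Form.atoms, ha])),
        ih2 (fun a ha => h a (by simp [Form.atoms, ha]))]
  | disj φ ψ ih1 ih2 =>
      simp [Form.eval, ih1 (fun a ha => h a (by simp [Form.atoms, ha])),
        ih2 (fun a ha => h a (by simp [Form.atoms, ha]))]

lemma litForm_eval_self (v : α → Bool) (a : α) : (litForm (a, v a)).eval v = true := by
  by_cases h : v a <;> simp [litForm, Form.eval, h]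

lemma litForm_eval_agrees {v w : α → Bool} {a : α}
    (h : (litForm (a, v a)).eval w = true) : v a = w a := by
  by_cases hv : v a <;> simp [litForm, Form.eval, hv] at h <;> simp [hv, h]

end Aux

/-- a world `ω` is a causal world of a deterministic causal system
`CS = (Δ, E, O)` iff `ω ⊨ O`, `ω` satisfies natural necessity, and `ω` is explainable. -/
theorem causalWorld_iff_necessary_sufficient {α : Type}
    (CS : CausalSystem α) (hLit : ∀ r ∈ CS.Δ, IsLiteralRule r) (v : α → Bool) :
    CS.CausalWorld v ↔
      ((∀ o ∈ CS.O, o.eval v = true) ∧ CS.Necessary v ∧ CS.Sufficient v) := by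
  constructor
  · rintro ⟨hC, hO⟩
    have hNec : CS.Necessary v := by
      rintro ⟨φ, ψ⟩ hr
      have key : φ.eval v = true → ψ.eval v = true := by
        intro hφ
        have hmem : φ ∈ Cons CS.closure (CS.extTrue v) := by rw [hC]; exact hφ
        obtain ⟨L, hL, hd⟩ := hmem
        have hent : Entails {(conjList L).conj φ} φ := by
          intro w hw
          have := hw _ rfl
          simp [Form.eval] at this
          exact this.2
        have hψ : ψ ∈ Cons CS.closure (CS.extTrue v) :=
          ⟨L, hL, hd.cut (Derives.strengthening hent (Derives.base hr))⟩
        rw [hC] at hψ; exact hψ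
      simp only [constraintForm, Form.impl, Form.eval, Bool.or_eq_true,
        Bool.not_eq_true']
      by_cases h : φ.eval v = true
      · exact Or.inr (key h)
      · exact Or.inl (by simpa using h)
    have hres : CS.restr v = CS.closure :=
      Set.ext fun r => ⟨fun h => h.1, fun h => ⟨h, hNec r h⟩⟩
    refine ⟨hO, hNec, ?_⟩
    intro l hl
    rw [hres, hC]
    exact hl
  · rintro ⟨hO, hNec, hSuf⟩
    have hres : CS.restr v = CS.closure :=
      Set.ext fun r => ⟨fun h => h.1, fun h => ⟨h, hNec r h⟩⟩
    refine ⟨Set.Subset.antisymm ?_ ?_, hO⟩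
    · rintro ψ ⟨L, hL, hd⟩
      have hLtrue : (conjList L).eval v = true := by
        rw [conjList_eval]
        intro φ hφ
        obtain ⟨l, _, rfl, h⟩ := hL φ hφ
        exact h
      exact derives_sound hNec hd hLtrue
    · intro φ hφ
      have hφv : φ.eval v = true := hφ
      have hmem : conjList (φ.atoms.map (fun a => litForm (a, v a)))
          ∈ Cons CS.closure (CS.extTrue v) := by
        rw [← hres]
        apply cons_list_and
        intro ψ hψ
        obtain ⟨a, ha, rfl⟩ := List.mem_map.1 hψ
        exact hSuf (a, v a) (litForm_eval_self v a)
      refine cons_weaken hmem ?_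
      intro w hw
      have hc := hw _ rfl
      rw [conjList_eval] at hc
      have hag : ∀ a ∈ φ.atoms, v a = w a := fun a ha =>
        litForm_eval_agrees (hc _ (List.mem_map.2 ⟨a, ha, rfl⟩))
      rw [← eval_congr φ hag]
      exact hφv
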